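/- Recursive estimate on the degree of badness. Suppose the strictly increasing sequences Gamma, gamma satisfy: Gamma_1 >= 2 and Gamma_k < gamma_k/2 for all k >= 1; inf over k >= 1 of Gamma_{k+1}/theta_k >= 5, where theta_k := sum_{h=1}^k (Gamma_h + gamma_h); and a_0 := sum over k >= 0 of 2^{-k} log( [2(Gamma_{k+1}+gamma_{k+1})+1]^2 ) < infinity. Let p in [0,1], let Q_p be the Bernoulli product measure on Omega with Q_p(omega_x = 1) = p, and set psi_k := Q_p(x belongs to BB_k) (a quantity independent of x by translation invariance) and A_k(x) := B^(l)_{gamma_k + Gamma_k}(x) setminus B^(l)_{(Gamma_k - 1)/2}(x) (whose cardinality |A_k| does not depend on x). Then for every k >= 0: psi_{k+1} <= |A_{k+1}| psi_k^2. -/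
import Mathlib


open MeasureTheory Real

/-! Multi-scale geometry of the bad region.

The rescaled lattice `L^(l) = (lℤ)²` is identified with `ℤ²` via the bijection
`i ↦ l·i`; under this identification the rescaled distance `d_l` on `L^(l)` becomes the
ℓ¹ distance on `ℤ²`.  Accordingly, sites of `L^(l)` are represented by points of `ℤ²`
and all distances below are measured in units of `l`. -/

/-- Sites of the (rescaled) lattice. -/
abbrev Site : Type := ℤ × ℤ

/-- The ℓ¹ distance on the (rescaled) lattice, i.e. `d_l` in units of `l`. -/
def dist1 (x y : Site) : ℕ := (x.1 - y.1).natAbs + (x.2 - y.2).natAbs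

/-- The space `Ω = {0,1}^{L^(l)}`; `true` encodes `1` (bad), `false` encodes `0` (good). -/
abbrev Omega : Type := Site → Bool

/-- The closed ball `B^(l)_r(x)` of (real) radius `r` around `x`. -/
def ball1 (r : ℝ) (x : Site) : Set Site := {j | (dist1 x j : ℝ) ≤ r}

/-- `θ_k := ∑_{h=1}^k (Γ_h + γ_h)`. -/
noncomputable def thetaSeq (Γ γ : ℕ → ℝ) (k : ℕ) : ℝ := ∑ h ∈ Finset.Icc 1 k, (Γ h + γ h)

/-- `g` is a `k`-gentle atom for the bad set `B`: `g = B^(l)_{Γ_k}(x) ∩ B` for some `x ∈ B`,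
`diam_l(g) ≤ Γ_k`, and `d_l(g, B \ g) > γ_k`. -/
def kAtom (Γ γ : ℕ → ℝ) (k : ℕ) (B : Set Site) (g : Set Site) : Prop :=
  (∃ x ∈ B, g = ball1 (Γ k) x ∩ B) ∧
    (∀ x ∈ g, ∀ y ∈ g, (dist1 x y : ℝ) ≤ Γ k) ∧
    ∀ x ∈ g, ∀ y ∈ B \ g, γ k < (dist1 x y : ℝ)

/-- The union of all `k`-gentle atoms of the bad set `B`. -/
def gentleStep (Γ γ : ℕ → ℝ) (k : ℕ) (B : Set Site) : Set Site :=
  {y | ∃ g : Set Site, kAtom Γ γ k B g ∧ y ∈ g}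

/-- The `k`-bad sites `BB_k(ω)`:  `BB_0(ω) = {i : ω_i = 1}` and
`BB_k(ω) = BB_{k-1}(ω) \ GG_k(ω)`. -/
def BB (Γ γ : ℕ → ℝ) (ω : Omega) : ℕ → Set Site
  | 0 => {i | ω i = true}
  | k + 1 => BB Γ γ ω k \ gentleStep Γ γ (k + 1) (BB Γ γ ω k)

/-- The `k`-gentle sites `GG_k(ω)`:  `GG_0(ω) = {i : ω_i = 0}` and, for `k ≥ 1`,
`GG_k(ω)` is the union of the `k`-gentle atoms of `BB_{k-1}(ω)`. -/
def GG (Γ γ : ℕ → ℝ) (ω : Omega) : ℕ → Set Site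
  | 0 => {i | ω i = false}
  | k + 1 => gentleStep Γ γ (k + 1) (BB Γ γ ω k)

/-- `Qp` is the Bernoulli product measure on `Ω` with parameter `p`, characterized by its
cylinder probabilities. -/
def IsBernoulliProduct (p : ℝ) (Qp : Measure Omega) : Prop :=
  ∀ (S : Finset Site) (a : Site → Bool),
    Qp {ω : Omega | ∀ j ∈ S, ω j = a j} =
      ∏ j ∈ S, ENNReal.ofReal (if a j then p else 1 - p)

/-- The annulus `A_k(x) = B^(l)_{γ_k+Γ_k}(x) \ B^(l)_{(Γ_k-1)/2}(x)`. -/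
def annulus (Γ γ : ℕ → ℝ) (k : ℕ) (x : Site) : Set Site :=
  ball1 (γ k + Γ k) x \ ball1 ((Γ k - 1) / 2) x

/-! ### Auxiliary lemmas -/

lemma dist1_self (x : Site) : dist1 x x = 0 := by simp [dist1]
lemma dist1_comm (x y : Site) : dist1 x y = dist1 y x := by
  simp only [dist1]; omega
lemma dist1_triangle (x y z : Site) : dist1 x z ≤ dist1 x y + dist1 y z := by
  have h1 : (x.1 - z.1).natAbs ≤ (x.1 - y.1).natAbs + (y.1 - z.1).natAbs := by
    have h : x.1 - z.1 = (x.1 - y.1) + (y.1 - z.1) := by ring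
    rw [h]; exact Int.natAbs_add_le _ _
  have h2 : (x.2 - z.2).natAbs ≤ (x.2 - y.2).natAbs + (y.2 - z.2).natAbs := by
    have h : x.2 - z.2 = (x.2 - y.2) + (y.2 - z.2) := by ring
    rw [h]; exact Int.natAbs_add_le _ _
  simp only [dist1]; omega

lemma dist1_triangle' (x y z : Site) : (dist1 x z : ℝ) ≤ (dist1 x y : ℝ) + (dist1 y z : ℝ) := by
  exact_mod_cast Nat.cast_le.mpr (dist1_triangle x y z)

lemma ball1_finite (r : ℝ) (x : Site) : (ball1 r x).Finite := by
  apply Set.Finite.subset ((Set.finite_Icc (x.1 - ⌈r⌉) (x.1 + ⌈r⌉)).prod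
    (Set.finite_Icc (x.2 - ⌈r⌉) (x.2 + ⌈r⌉)))
  intro j hj
  have hj' : (dist1 x j : ℝ) ≤ r := hj
  have hr : (dist1 x j : ℝ) ≤ (⌈r⌉ : ℝ) := hj'.trans (Int.le_ceil r)
  have hz : (dist1 x j : ℤ) ≤ ⌈r⌉ := by exact_mod_cast hr
  have h1 : (x.1 - j.1).natAbs ≤ ⌈r⌉.toNat := by
    simp only [dist1] at hz; omega
  have h2 : (x.2 - j.2).natAbs ≤ ⌈r⌉.toNat := by
    simp only [dist1] at hz; omega
  constructor <;> simp only [Set.mem_Icc] <;> omega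

section Meas
variable (p : ℝ) (Qp : Measure Omega)

/-- cylinder -/
def cyl (F : Finset Site) (a : Site → Bool) : Set Omega := {ω | ∀ j ∈ F, ω j = a j}

lemma cyl_measurable (F : Finset Site) (a : Site → Bool) : MeasurableSet (cyl F a) := by
  have : cyl F a = ⋂ j ∈ F, (fun ω : Omega => ω j) ⁻¹' {a j} := by
    ext ω; simp [cyl]
  rw [this]
  exact MeasurableSet.biInter F.countable_toSet
    (fun j _ => (measurable_pi_apply j) (measurableSet_singleton (a j)))

/-- extend a config on F by false -/
def extF (F : Finset Site) (η : {x // x ∈ F} → Bool) : Site → Bool :=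
  fun s => if h : s ∈ F then η ⟨s, h⟩ else false

def DetBy (P : Omega → Prop) (F : Finset Site) : Prop :=
  ∀ ω ω' : Omega, (∀ j ∈ F, ω j = ω' j) → (P ω ↔ P ω')

open Classical in
lemma det_decomp {P : Omega → Prop} {F : Finset Site} (hP : DetBy P F) :
    {ω | P ω} = ⋃ η ∈ Finset.univ.filter (fun η : {x // x ∈ F} → Bool => P (extF F η)),
      cyl F (extF F η) := by
  classical
  ext ω
  simp only [Set.mem_setOf_eq, Set.mem_iUnion, Finset.mem_filter, Finset.mem_univ, true_and]
  constructor
  · intro hω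
    refine ⟨fun j => ω j.1, ?_, ?_⟩
    · exact (hP ω _ (fun j hj => by simp [extF, hj])).mp hω
    · intro j hj; simp [cyl, extF, hj]
  · rintro ⟨η, hη, hcyl⟩
    exact (hP _ ω (fun j hj => ((hcyl j hj).symm))).mp hη

open Classical in
lemma det_measurable {P : Omega → Prop} {F : Finset Site} (hP : DetBy P F) :
    MeasurableSet {ω | P ω} := by
  classical
  rw [det_decomp hP]
  exact Finset.measurableSet_biUnion _ (fun η _ => cyl_measurable F (extF F η))

lemma cyl_disjoint {F : Finset Site} {η η' : {x // x ∈ F} → Bool} (h : η ≠ η') :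
    Disjoint (cyl F (extF F η)) (cyl F (extF F η')) := by
  rw [Set.disjoint_left]
  intro ω hω hω'
  apply h
  funext j
  have h1 := hω j.1 j.2
  have h2 := hω' j.1 j.2
  simp only [extF, j.2, dif_pos] at h1 h2
  rw [← h1, ← h2]

open Classical in
lemma measure_det {P : Omega → Prop} {F : Finset Site} (hP : DetBy P F) :
    Qp {ω | P ω} = ∑ η ∈ Finset.univ.filter (fun η : {x // x ∈ F} → Bool => P (extF F η)),
      Qp (cyl F (extF F η)) := by
  classical
  rw [det_decomp hP]
  exact measure_biUnion_finset
    (fun η _ η' _ hne => cyl_disjoint hne)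
    (fun η _ => cyl_measurable F (extF F η))
end Meas

section Indep
variable {p : ℝ} {Qp : Measure Omega}

lemma hQp_cyl (hQp : IsBernoulliProduct p Qp) (F : Finset Site) (a : Site → Bool) :
    Qp (cyl F a) = ∏ j ∈ F, ENNReal.ofReal (if a j then p else 1 - p) := hQp F a

lemma cyl_inter_cyl (hQp : IsBernoulliProduct p Qp) {F1 F2 : Finset Site}
    (hd : Disjoint F1 F2) (a b : Site → Bool) :
    Qp (cyl F1 a ∩ cyl F2 b) = Qp (cyl F1 a) * Qp (cyl F2 b) := by
  classical
  set c : Site → Bool := fun j => if j ∈ F1 then a j else b j with hc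
  have hset : cyl F1 a ∩ cyl F2 b = cyl (F1 ∪ F2) c := by
    ext ω
    simp only [cyl, Set.mem_inter_iff, Set.mem_setOf_eq, Finset.mem_union]
    constructor
    · rintro ⟨h1, h2⟩ j hj
      rcases hj with hj | hj
      · simp [hc, hj, h1 j hj]
      · have : j ∉ F1 := fun hmem => (Finset.disjoint_left.mp hd hmem) hj
        simp [hc, this, h2 j hj]
    · intro h
      constructor
      · intro j hj; have := h j (Or.inl hj); simpa [hc, hj] using this
      · intro j hj
        have hj1 : j ∉ F1 := fun hmem => (Finset.disjoint_left.mp hd hmem) hj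
        have := h j (Or.inr hj); simpa [hc, hj1] using this
  rw [hset, hQp_cyl hQp, Finset.prod_union hd, hQp_cyl hQp, hQp_cyl hQp]
  congr 1
  · exact Finset.prod_congr rfl (fun j hj => by simp [hc, hj])
  · exact Finset.prod_congr rfl (fun j hj => by
      have hj1 : j ∉ F1 := fun hmem => (Finset.disjoint_left.mp hd hmem) hj
      simp [hc, hj1])

open Classical in
lemma indep_det (hQp : IsBernoulliProduct p Qp) {P1 P2 : Omega → Prop} {F1 F2 : Finset Site}
    (hd : Disjoint F1 F2) (h1 : DetBy P1 F1) (h2 : DetBy P2 F2) :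
    Qp ({ω | P1 ω} ∩ {ω | P2 ω}) = Qp {ω | P1 ω} * Qp {ω | P2 ω} := by
  classical
  have key : ∀ a : Site → Bool,
      Qp (cyl F1 a ∩ {ω | P2 ω}) = Qp (cyl F1 a) * Qp {ω | P2 ω} := by
    intro a
    have hU : cyl F1 a ∩ {ω | P2 ω} =
        ⋃ η ∈ Finset.univ.filter (fun η : {x // x ∈ F2} → Bool => P2 (extF F2 η)),
          (cyl F1 a ∩ cyl F2 (extF F2 η)) := by
      rw [det_decomp h2]; ext ω; simp only [Set.mem_inter_iff, Set.mem_iUnion]; tauto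
    have hm := measure_biUnion_finset
      (s := Finset.univ.filter (fun η : {x // x ∈ F2} → Bool => P2 (extF F2 η)))
      (f := fun η => cyl F1 a ∩ cyl F2 (extF F2 η)) (μ := Qp)
      (fun η _ η' hη' hne => (cyl_disjoint hne).mono Set.inter_subset_right Set.inter_subset_right)
      (fun η _ => ((cyl_measurable F1 a).inter (cyl_measurable F2 _)))
    rw [hU, hm, measure_det Qp h2, Finset.mul_sum]
    exact Finset.sum_congr rfl (fun η _ => cyl_inter_cyl hQp hd a _)
  have hU1 : {ω | P1 ω} ∩ {ω | P2 ω} =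
      ⋃ η ∈ Finset.univ.filter (fun η : {x // x ∈ F1} → Bool => P1 (extF F1 η)),
        (cyl F1 (extF F1 η) ∩ {ω | P2 ω}) := by
    rw [det_decomp h1]; ext ω; simp only [Set.mem_inter_iff, Set.mem_iUnion]; tauto
  have hm1 := measure_biUnion_finset
    (s := Finset.univ.filter (fun η : {x // x ∈ F1} → Bool => P1 (extF F1 η)))
    (f := fun η => cyl F1 (extF F1 η) ∩ {ω | P2 ω}) (μ := Qp)
    (fun η _ η' hη' hne => (cyl_disjoint hne).mono Set.inter_subset_left Set.inter_subset_left)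
    (fun η _ => ((cyl_measurable F1 _).inter (det_measurable h2)))
  rw [hU1, hm1, measure_det Qp h1, Finset.sum_mul]
  exact Finset.sum_congr rfl (fun η _ => key _)
end Indep

section Shift
variable {p : ℝ} {Qp : Measure Omega}

def shiftO (v : Site) (ω : Omega) : Omega := fun s => ω (s + v)

open Classical in
lemma measure_shift (hQp : IsBernoulliProduct p Qp) (F : Finset Site) (v : Site)
    (P Q : Omega → Prop) (hP : DetBy P F) (hPQ : ∀ ω, Q ω ↔ P (shiftO v ω)) :
    Qp {ω | Q ω} = Qp {ω | P ω} := by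
  classical
  have hmem : ∀ s : Site, s + v ∈ F.map (Equiv.addRight v).toEmbedding ↔ s ∈ F := by
    intro s; rw [Finset.mem_map_equiv]; simp
  have hQ : DetBy Q (F.map (Equiv.addRight v).toEmbedding) := by
    intro ω ω' hag
    rw [hPQ ω, hPQ ω']
    exact hP _ _ (fun j hj => hag (j + v) ((hmem j).mpr hj))
  set e : {x // x ∈ F} ≃ {x // x ∈ F.map (Equiv.addRight v).toEmbedding} :=
    (Equiv.addRight v).subtypeEquiv (fun j => by simpa using (hmem j).symm) with he
  set Ψ : ({x // x ∈ F} → Bool) ≃ ({x // x ∈ F.map (Equiv.addRight v).toEmbedding} → Bool) :=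
    Equiv.arrowCongr e (Equiv.refl Bool) with hΨ
  have key : ∀ (η : {x // x ∈ F} → Bool) (s : Site) (hs : s ∈ F),
      extF (F.map (Equiv.addRight v).toEmbedding) (Ψ η) (s + v) = extF F η s := by
    intro η s hs
    have hs' : s + v ∈ F.map (Equiv.addRight v).toEmbedding := (hmem s).mpr hs
    simp only [extF, dif_pos hs', dif_pos hs]
    have h2 : e.symm ⟨s + v, hs'⟩ = ⟨s, hs⟩ := by
      apply e.injective; rw [Equiv.apply_symm_apply]
      apply Subtype.ext; simp [he]
    simp [hΨ, Equiv.arrowCongr, h2]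
  have hagree : ∀ η : {x // x ∈ F} → Bool,
      (P (extF F η) ↔ Q (extF (F.map (Equiv.addRight v).toEmbedding) (Ψ η))) := by
    intro η
    rw [hPQ]
    exact hP _ _ (fun j hj => (key η j hj).symm)
  have hprod : ∀ η : {x // x ∈ F} → Bool,
      Qp (cyl (F.map (Equiv.addRight v).toEmbedding) (extF (F.map (Equiv.addRight v).toEmbedding) (Ψ η)))
        = Qp (cyl F (extF F η)) := by
    intro η
    rw [hQp_cyl hQp, hQp_cyl hQp, Finset.prod_map]
    exact Finset.prod_congr rfl (fun j hj => by
      simp only [Equiv.coe_toEmbedding, Equiv.coe_addRight]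
      simp only [key η j hj])
  rw [measure_det Qp hQ, measure_det Qp hP]
  refine (Finset.sum_bij (fun η _ => Ψ η) ?_ ?_ ?_ ?_).symm
  · intro η hη
    simp only [Finset.mem_filter, Finset.mem_univ, true_and] at hη ⊢
    exact (hagree η).mp hη
  · intro η1 _ η2 _ h12
    exact Ψ.injective h12
  · intro η' hη'
    refine ⟨Ψ.symm η', ?_, (Ψ.apply_symm_apply η')⟩
    simp only [Finset.mem_filter, Finset.mem_univ, true_and] at hη' ⊢
    have h3 := (hagree (Ψ.symm η'))
    rw [Ψ.apply_symm_apply] at h3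
    exact h3.mpr hη'
  · intro η hη
    exact (hprod η).symm
end Shift

section Geometry
variable (Γ γ : ℕ → ℝ)

lemma theta_succ (k : ℕ) :
    thetaSeq Γ γ (k + 1) = thetaSeq Γ γ k + (Γ (k + 1) + γ (k + 1)) := by
  unfold thetaSeq
  rw [← Finset.sum_Icc_succ_top (by omega : 1 ≤ k + 1)]

lemma theta_nonneg (hΓ0 : ∀ k, 1 ≤ k → 0 ≤ Γ k) (hγ0 : ∀ k, 1 ≤ k → 0 ≤ γ k) (k : ℕ) :
    0 ≤ thetaSeq Γ γ k := by
  apply Finset.sum_nonneg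
  intro h hh
  rw [Finset.mem_Icc] at hh
  exact add_nonneg (hΓ0 h hh.1) (hγ0 h hh.1)

/-- Normalization: `x` is gentle at stage `k` iff the canonical candidate atom centered
at `x` is an atom. -/
lemma gentle_iff (k : ℕ) (hΓ0 : 0 ≤ Γ k) (hΓγ : Γ k ≤ γ k) (B : Set Site) (x : Site) :
    x ∈ gentleStep Γ γ k B ↔ x ∈ B ∧ kAtom Γ γ k B (ball1 (Γ k) x ∩ B) := by
  constructor
  · rintro ⟨g, hatom, hxg⟩
    obtain ⟨⟨c, hcB, hgc⟩, hdiam, hsep⟩ := hatom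
    have hxB : x ∈ B := by rw [hgc] at hxg; exact hxg.2
    have hgx : g = ball1 (Γ k) x ∩ B := by
      apply Set.Subset.antisymm
      · intro z hz
        exact ⟨hdiam x hxg z hz, by rw [hgc] at hz; exact hz.2⟩
      · intro z hz
        by_contra hzg
        have := hsep x hxg z ⟨hz.2, hzg⟩
        have hle : (dist1 x z : ℝ) ≤ Γ k := hz.1
        linarith
    refine ⟨hxB, ⟨x, hxB, rfl⟩, ?_, ?_⟩
    · rw [← hgx]; exact hdiam
    · rw [← hgx]; exact hsep
  · rintro ⟨hxB, hatom⟩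
    refine ⟨ball1 (Γ k) x ∩ B, hatom, ?_, hxB⟩
    show (dist1 x x : ℝ) ≤ Γ k
    rw [dist1_self]; exact_mod_cast hΓ0

/-- Transport of the canonical atom property between two bad sets agreeing near `x`. -/
lemma atom_transport (k : ℕ) (hΓ0 : 0 ≤ Γ k) (hγ0 : 0 ≤ γ k) (B B' : Set Site) (x : Site)
    (hz : ∀ z : Site, (dist1 x z : ℝ) ≤ Γ k + γ k → (z ∈ B ↔ z ∈ B')) (hxB : x ∈ B)
    (h : kAtom Γ γ k B (ball1 (Γ k) x ∩ B)) : kAtom Γ γ k B' (ball1 (Γ k) x ∩ B') := by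
  obtain ⟨-, hdiam, hsep⟩ := h
  have hgeq : ball1 (Γ k) x ∩ B = ball1 (Γ k) x ∩ B' := by
    ext z
    simp only [Set.mem_inter_iff]
    have hd : (dist1 x z : ℝ) ≤ Γ k → (z ∈ B ↔ z ∈ B') :=
      fun h' => hz z (by linarith)
    constructor
    · rintro ⟨h1, h2⟩; exact ⟨h1, (hd h1).mp h2⟩
    · rintro ⟨h1, h2⟩; exact ⟨h1, (hd h1).mpr h2⟩
  refine ⟨⟨x, ?_, rfl⟩, ?_, ?_⟩
  · exact (hz x (by rw [dist1_self]; push_cast; linarith)).mp hxB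
  · rw [← hgeq]; exact hdiam
  · rw [← hgeq]
    intro z hzg w hw
    by_contra hcon
    push_neg at hcon
    have hzx : (dist1 x z : ℝ) ≤ Γ k := hzg.1
    have hxw : (dist1 x w : ℝ) ≤ Γ k + γ k := by
      calc (dist1 x w : ℝ) ≤ (dist1 x z : ℝ) + (dist1 z w : ℝ) := dist1_triangle' x z w
        _ ≤ Γ k + γ k := by linarith
    have hwB : w ∈ B := (hz w hxw).mpr hw.1
    have := hsep z hzg w ⟨hwB, hw.2⟩
    linarith

/-- Locality: membership of `x` in `BB_k` only depends on `ω` inside `B_{θ_k}(x)`. -/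
lemma BB_det (hΓ0 : ∀ k, 1 ≤ k → 0 ≤ Γ k) (hγ0 : ∀ k, 1 ≤ k → 0 ≤ γ k)
    (hΓγ : ∀ k, 1 ≤ k → Γ k ≤ γ k) :
    ∀ (k : ℕ) (x : Site) (ω ω' : Omega),
      (∀ j, (dist1 x j : ℝ) ≤ thetaSeq Γ γ k → ω j = ω' j) →
      (x ∈ BB Γ γ ω k ↔ x ∈ BB Γ γ ω' k) := by
  intro k
  induction k with
  | zero =>
    intro x ω ω' hag
    have h0 : ω x = ω' x := by
      apply hag
      rw [dist1_self]
      simp [thetaSeq]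
    simp only [BB, Set.mem_setOf_eq, h0]
  | succ k ih =>
    intro x ω ω' hag
    have hΓk : 0 ≤ Γ (k + 1) := hΓ0 (k + 1) (by omega)
    have hγk : 0 ≤ γ (k + 1) := hγ0 (k + 1) (by omega)
    have hθk : 0 ≤ thetaSeq Γ γ k := theta_nonneg Γ γ hΓ0 hγ0 k
    -- membership in `BB_k` is transported for all nearby points
    have hz : ∀ z : Site, (dist1 x z : ℝ) ≤ Γ (k + 1) + γ (k + 1) →
        (z ∈ BB Γ γ ω k ↔ z ∈ BB Γ γ ω' k) := by
      intro z hdz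
      apply ih z
      intro j hj
      apply hag
      calc (dist1 x j : ℝ) ≤ (dist1 x z : ℝ) + (dist1 z j : ℝ) := dist1_triangle' x z j
        _ ≤ (Γ (k + 1) + γ (k + 1)) + thetaSeq Γ γ k := by linarith
        _ = thetaSeq Γ γ (k + 1) := by rw [theta_succ]; ring
    have hxx : x ∈ BB Γ γ ω k ↔ x ∈ BB Γ γ ω' k := by
      apply hz; rw [dist1_self]; push_cast; linarith
    -- the candidate atoms coincide
    have hgeq : ball1 (Γ (k + 1)) x ∩ BB Γ γ ω k = ball1 (Γ (k + 1)) x ∩ BB Γ γ ω' k := by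
      ext z
      simp only [Set.mem_inter_iff]
      constructor
      · intro hzz; exact ⟨hzz.1, (hz z (le_trans hzz.1 (by linarith))).mp hzz.2⟩
      · intro hzz; exact ⟨hzz.1, (hz z (le_trans hzz.1 (by linarith))).mpr hzz.2⟩
    have hΓγk := hΓγ (k + 1) (by omega)
    show x ∈ BB Γ γ ω k \ gentleStep Γ γ (k + 1) (BB Γ γ ω k) ↔
      x ∈ BB Γ γ ω' k \ gentleStep Γ γ (k + 1) (BB Γ γ ω' k)
    rw [Set.mem_diff, Set.mem_diff, gentle_iff Γ γ (k + 1) hΓk hΓγk,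
      gentle_iff Γ γ (k + 1) hΓk hΓγk]
    constructor
    · rintro ⟨h1, h2⟩
      refine ⟨hxx.mp h1, fun hcon => h2 ⟨h1, ?_⟩⟩
      exact atom_transport Γ γ (k + 1) hΓk hγk _ _ x
        (fun z hd => (hz z hd).symm) (hxx.mp h1) hcon.2
    · rintro ⟨h1, h2⟩
      refine ⟨hxx.mpr h1, fun hcon => h2 ⟨h1, ?_⟩⟩
      exact atom_transport Γ γ (k + 1) hΓk hγk _ _ x
        (fun z hd => hz z hd) (hxx.mpr h1) hcon.2
end Geometry

section ShiftCov
variable (Γ γ : ℕ → ℝ)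

lemma dist1_shift (x y v : Site) : dist1 (x + v) (y + v) = dist1 x y := by
  show ((x + v).1 - (y + v).1).natAbs + ((x + v).2 - (y + v).2).natAbs = _
  have h1 : (x + v).1 - (y + v).1 = x.1 - y.1 := by
    simp
  have h2 : (x + v).2 - (y + v).2 = x.2 - y.2 := by
    simp
  rw [h1, h2]; rfl

lemma ball1_pre (r : ℝ) (c v : Site) :
    (fun s : Site => s + v) ⁻¹' ball1 r c = ball1 r (c - v) := by
  ext z
  show (dist1 c (z + v) : ℝ) ≤ r ↔ (dist1 (c - v) z : ℝ) ≤ r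
  rw [show dist1 c (z + v) = dist1 (c - v) z by
    rw [← dist1_shift (c - v) z v, sub_add_cancel]]

lemma kAtom_pre (k : ℕ) (v : Site) {B g : Set Site} (h : kAtom Γ γ k B g) :
    kAtom Γ γ k ((fun s : Site => s + v) ⁻¹' B) ((fun s : Site => s + v) ⁻¹' g) := by
  obtain ⟨⟨c, hcB, hgc⟩, hdiam, hsep⟩ := h
  refine ⟨⟨c - v, ?_, ?_⟩, ?_, ?_⟩
  · show c - v + v ∈ B; rwa [sub_add_cancel]
  · rw [hgc, Set.preimage_inter, ball1_pre]
  · intro z hz w hw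
    rw [← dist1_shift z w v]
    exact hdiam _ hz _ hw
  · intro z hz w hw
    rw [← dist1_shift z w v]
    exact hsep _ hz _ ⟨hw.1, hw.2⟩

lemma mem_pre_pre (v : Site) (S : Set Site) (s : Site) :
    s ∈ (fun t : Site => t + -v) ⁻¹' ((fun t : Site => t + v) ⁻¹' S) ↔ s ∈ S := by
  show s + -v + v ∈ S ↔ s ∈ S
  rw [neg_add_cancel_right]

lemma gentleStep_pre (k : ℕ) (v : Site) (B : Set Site) (x : Site) :
    x ∈ gentleStep Γ γ k ((fun s : Site => s + v) ⁻¹' B) ↔ x + v ∈ gentleStep Γ γ k B := by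
  constructor
  · rintro ⟨g', hatom', hx⟩
    refine ⟨(fun t : Site => t + -v) ⁻¹' g', ?_, ?_⟩
    · have h2 := kAtom_pre Γ γ k (-v) hatom'
      have hBeq : (fun t : Site => t + -v) ⁻¹' ((fun t : Site => t + v) ⁻¹' B) = B :=
        Set.ext (mem_pre_pre v B)
      rwa [hBeq] at h2
    · show x + v + -v ∈ g'
      rwa [add_neg_cancel_right]
  · rintro ⟨g, hatom, hxv⟩
    exact ⟨(fun s : Site => s + v) ⁻¹' g, kAtom_pre Γ γ k v hatom, hxv⟩

lemma BB_shift (v : Site) (ω : Omega) (k : ℕ) :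
    ∀ x : Site, x ∈ BB Γ γ (shiftO v ω) k ↔ x + v ∈ BB Γ γ ω k := by
  induction k with
  | zero => intro x; exact Iff.rfl
  | succ k ih =>
    intro x
    have hset : BB Γ γ (shiftO v ω) k = (fun s : Site => s + v) ⁻¹' BB Γ γ ω k :=
      Set.ext (fun y => ih y)
    show x ∈ BB Γ γ (shiftO v ω) k \ gentleStep Γ γ (k + 1) (BB Γ γ (shiftO v ω) k) ↔
      x + v ∈ BB Γ γ ω k \ gentleStep Γ γ (k + 1) (BB Γ γ ω k)
    rw [Set.mem_diff, Set.mem_diff, hset]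
    rw [gentleStep_pre Γ γ (k + 1) v (BB Γ γ ω k) x]
    rfl
end ShiftCov

/-- Recursive estimate on the degree of badness.  Under the steepness
conditions on `Γ, γ`, for the Bernoulli product measure `Q_p` with parameter `p ∈ [0,1]`,
setting `ψ_k := Q_p(x ∈ BB_k)` (independent of `x`) and
`A_k(x) := B^(l)_{γ_k+Γ_k}(x) \ B^(l)_{(Γ_k-1)/2}(x)`, one has
`ψ_{k+1} ≤ |A_{k+1}| ψ_k²` for every `k ≥ 0`. -/
theorem recursive_badness_estimate (Γ γ : ℕ → ℝ)
    (hΓpos : ∀ k, 1 ≤ k → 0 < Γ k) (hγpos : ∀ k, 1 ≤ k → 0 < γ k)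
    (hΓmono : ∀ k, 1 ≤ k → Γ k < Γ (k + 1)) (hγmono : ∀ k, 1 ≤ k → γ k < γ (k + 1))
    (hΓ1 : 2 ≤ Γ 1) (hΓγ : ∀ k, 1 ≤ k → Γ k < γ k / 2)
    (hsteep : ∀ k, 1 ≤ k → 5 ≤ Γ (k + 1) / thetaSeq Γ γ k)
    (ha0 : Summable fun k : ℕ =>
      (2 : ℝ) ^ (-(k : ℤ)) * Real.log ((2 * (Γ (k + 1) + γ (k + 1)) + 1) ^ 2))
    (p : ℝ) (hp0 : 0 ≤ p) (hp1 : p ≤ 1)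
    (Qp : Measure Omega) [IsProbabilityMeasure Qp] (hQp : IsBernoulliProduct p Qp)
    (x : Site) (k : ℕ) :
    Qp {ω | x ∈ BB Γ γ ω (k + 1)} ≤
      ((annulus Γ γ (k + 1) x).ncard : ENNReal) * Qp {ω | x ∈ BB Γ γ ω k} ^ 2 := by
  classical
  have hΓ0 : ∀ k, 1 ≤ k → 0 ≤ Γ k := fun k hk => (hΓpos k hk).le
  have hγ0 : ∀ k, 1 ≤ k → 0 ≤ γ k := fun k hk => (hγpos k hk).le
  have hΓleγ : ∀ k, 1 ≤ k → Γ k ≤ γ k := fun k hk =>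
    (hΓγ k hk).le.trans (half_le_self (hγpos k hk).le)
  set θ := thetaSeq Γ γ k with hθdef
  have hθ0 : 0 ≤ θ := theta_nonneg Γ γ hΓ0 hγ0 k
  have hΓk1 : 0 < Γ (k + 1) := hΓpos (k + 1) (by omega)
  have hγk1 : 0 < γ (k + 1) := hγpos (k + 1) (by omega)
  have hΓleγk1 : Γ (k + 1) ≤ γ (k + 1) := hΓleγ (k + 1) (by omega)
  -- key numeric inequality
  have hkey : 2 * θ ≤ (Γ (k + 1) - 1) / 2 := by
    rcases Nat.eq_zero_or_pos k with hk0 | hkpos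
    · subst hk0
      have : θ = 0 := by simp [hθdef, thetaSeq]
      rw [this]; linarith
    · have hθ1 : Γ 1 + γ 1 ≤ θ := by
        rw [hθdef]
        unfold thetaSeq
        apply Finset.single_le_sum (f := fun h => Γ h + γ h)
        · intro h hh
          rw [Finset.mem_Icc] at hh
          exact add_nonneg (hΓ0 h hh.1) (hγ0 h hh.1)
        · rw [Finset.mem_Icc]; omega
      have hγ1 : 4 < γ 1 := by
        have := hΓγ 1 le_rfl; linarith
      have hθbig : 6 < θ := by linarith
      have hθpos : 0 < θ := by linarith
      have h5 : 5 * θ ≤ Γ (k + 1) := by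
        have := hsteep k hkpos
        rw [le_div_iff₀ hθpos] at this
        linarith
      linarith
  set F : Site → Finset Site := fun z => (ball1_finite θ z).toFinset with hF
  have hdet : ∀ z : Site, DetBy (fun ω => z ∈ BB Γ γ ω k) (F z) := by
    intro z ω ω' hag
    apply BB_det Γ γ hΓ0 hγ0 hΓleγ k z ω ω'
    intro j hj
    exact hag j (by rw [hF]; exact (ball1_finite θ z).mem_toFinset.mpr hj)
  have hA : (annulus Γ γ (k + 1) x).Finite :=
    (ball1_finite (γ (k + 1) + Γ (k + 1)) x).subset Set.diff_subset
  -- inclusion of events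
  have hsub : {ω : Omega | x ∈ BB Γ γ ω (k + 1)} ⊆
      ⋃ y ∈ hA.toFinset,
        ({ω : Omega | x ∈ BB Γ γ ω k} ∩ {ω : Omega | y ∈ BB Γ γ ω k}) := by
    intro ω hω
    have hxB : x ∈ BB Γ γ ω k := hω.1
    have hng : x ∉ gentleStep Γ γ (k + 1) (BB Γ γ ω k) := hω.2
    rw [gentle_iff Γ γ (k + 1) hΓk1.le hΓleγk1] at hng
    set B := BB Γ γ ω k with hB
    set g := ball1 (Γ (k + 1)) x ∩ B with hg
    have hnatom : ¬ kAtom Γ γ (k + 1) B g := fun a => hng ⟨hxB, a⟩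
    have hns : ¬((∀ z ∈ g, ∀ w ∈ g, (dist1 z w : ℝ) ≤ Γ (k + 1)) ∧
        ∀ z ∈ g, ∀ w ∈ B \ g, γ (k + 1) < (dist1 z w : ℝ)) :=
      fun hds => hnatom ⟨⟨x, hxB, rfl⟩, hds.1, hds.2⟩
    -- produce a witness in the annulus that is still k-bad
    have hwit : ∃ y, y ∈ annulus Γ γ (k + 1) x ∧ y ∈ B := by
      rcases not_and_or.mp hns with hnd | hnsep
      · push_neg at hnd
        obtain ⟨z, hz, w, hw, hzw⟩ := hnd
        have hxz : (dist1 x z : ℝ) ≤ Γ (k + 1) := hz.1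
        have hxw : (dist1 x w : ℝ) ≤ Γ (k + 1) := hw.1
        have hsum : Γ (k + 1) < (dist1 x z : ℝ) + (dist1 x w : ℝ) := by
          have htr : (dist1 z w : ℝ) ≤ (dist1 z x : ℝ) + (dist1 x w : ℝ) :=
            dist1_triangle' z x w
          have hcomm : (dist1 z x : ℝ) = (dist1 x z : ℝ) := by rw [dist1_comm]
          linarith
        by_cases hc : Γ (k + 1) / 2 < (dist1 x z : ℝ)
        · refine ⟨z, ⟨by show (dist1 x z : ℝ) ≤ _; linarith, ?_⟩, hz.2⟩
          show ¬ ((dist1 x z : ℝ) ≤ (Γ (k + 1) - 1) / 2)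
          push_neg; linarith
        · push_neg at hc
          refine ⟨w, ⟨by show (dist1 x w : ℝ) ≤ _; linarith, ?_⟩, hw.2⟩
          show ¬ ((dist1 x w : ℝ) ≤ (Γ (k + 1) - 1) / 2)
          push_neg; linarith
      · push_neg at hnsep
        obtain ⟨z, hz, w, hw, hzw⟩ := hnsep
        have hxz : (dist1 x z : ℝ) ≤ Γ (k + 1) := hz.1
        have hxw : (dist1 x w : ℝ) ≤ (dist1 x z : ℝ) + (dist1 z w : ℝ) :=
          dist1_triangle' x z w
        have hwball : w ∉ ball1 (Γ (k + 1)) x := fun hmem => hw.2 ⟨hmem, hw.1⟩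
        have hwd : Γ (k + 1) < (dist1 x w : ℝ) := by
          by_contra hcon
          push_neg at hcon
          exact hwball hcon
        refine ⟨w, ⟨by show (dist1 x w : ℝ) ≤ _; linarith, ?_⟩, hw.1⟩
        show ¬ ((dist1 x w : ℝ) ≤ (Γ (k + 1) - 1) / 2)
        push_neg; linarith
    obtain ⟨y, hyA, hyB⟩ := hwit
    simp only [Set.mem_iUnion]
    exact ⟨y, hA.mem_toFinset.mpr hyA, hxB, hyB⟩
  -- distance between x and any annulus point
  have hfar : ∀ y ∈ hA.toFinset, Disjoint (F x) (F y) := by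
    intro y hy
    rw [hA.mem_toFinset] at hy
    have hyd : (Γ (k + 1) - 1) / 2 < (dist1 x y : ℝ) := by
      by_contra hcon
      push_neg at hcon
      exact hy.2 hcon
    rw [Finset.disjoint_left]
    intro j hjx hjy
    rw [hF, Set.Finite.mem_toFinset] at hjx hjy
    have h1 : (dist1 x j : ℝ) ≤ θ := hjx
    have h2 : (dist1 y j : ℝ) ≤ θ := hjy
    have h3 : (dist1 x y : ℝ) ≤ (dist1 x j : ℝ) + (dist1 j y : ℝ) := dist1_triangle' x j y
    have h4 : (dist1 j y : ℝ) = (dist1 y j : ℝ) := by rw [dist1_comm]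
    linarith
  -- translation invariance
  have htrans : ∀ y : Site, Qp {ω | y ∈ BB Γ γ ω k} = Qp {ω | x ∈ BB Γ γ ω k} := by
    intro y
    apply measure_shift hQp (F x) (y - x) (fun ω => x ∈ BB Γ γ ω k)
      (fun ω => y ∈ BB Γ γ ω k) (hdet x)
    intro ω
    rw [BB_shift Γ γ (y - x) ω k x, add_sub_cancel]
  calc Qp {ω | x ∈ BB Γ γ ω (k + 1)}
      ≤ Qp (⋃ y ∈ hA.toFinset,
          ({ω : Omega | x ∈ BB Γ γ ω k} ∩ {ω : Omega | y ∈ BB Γ γ ω k})) :=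
        measure_mono hsub
    _ ≤ ∑ y ∈ hA.toFinset,
          Qp ({ω : Omega | x ∈ BB Γ γ ω k} ∩ {ω : Omega | y ∈ BB Γ γ ω k}) :=
        measure_biUnion_finset_le _ _
    _ = ∑ y ∈ hA.toFinset, Qp {ω | x ∈ BB Γ γ ω k} * Qp {ω | y ∈ BB Γ γ ω k} :=
        Finset.sum_congr rfl (fun y hy =>
          indep_det hQp (hfar y hy) (hdet x) (hdet y))
    _ = ∑ _y ∈ hA.toFinset, Qp {ω | x ∈ BB Γ γ ω k} * Qp {ω | x ∈ BB Γ γ ω k} :=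
        Finset.sum_congr rfl (fun y _ => by rw [htrans y])
    _ = (hA.toFinset.card : ENNReal) * Qp {ω | x ∈ BB Γ γ ω k} ^ 2 := by
        rw [Finset.sum_const, nsmul_eq_mul, pow_two]
    _ = ((annulus Γ γ (k + 1) x).ncard : ENNReal) * Qp {ω | x ∈ BB Γ γ ω k} ^ 2 := by
        rw [Set.ncard_eq_toFinset_card _ hA]
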